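/- Under the linear regression model y_i = x_iᵀβ_0 + σ_0 ε_i with ε_i i.i.d. with continuous distribution function G_0 symmetric around 0 and independent of x_i, and with β̂ → β_0 and σ̂ → σ_0 > 0 almost surely, the data-driven proportion d_n = sup_{t≥0} max(G^+(t) − G_n^+(t), 0) converges almost surely to d_0 = sup_{t≥0} max(G^+(t) − G_0^+(t), 0), where G_n^+(t) = (1/n) Σ 1{|r_i| ≤ t} with r_i = (y_i − x_iᵀβ̂)/σ̂, G_0^+ is the distribution function of |ε_1|, and G^+ is the distribution function of |V| for a fixed reference distribution V ~ G. -/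

import Mathlib

/-!
The residuals satisfy `|r_i − σ₀ ε_i| ≤ ‖x_i‖ ‖β̂ − β₀‖`, so outside the rare indices with
`‖x_i‖ > M` the event `|r_i| ≤ t` is squeezed between `|ε_i| ≤ q₀` and `|ε_i| ≤ q₁` for rationals
`q₀ < t < q₁` as soon as `β̂` and `σ̂` are close to `β₀` and `σ₀`. The strong law of large numbers,
applied to countably many indicator sequences, and the continuity of `G₀⁺` then give
`Gₙ⁺(t) → G₀⁺(t)` for every `t`, almost surely. Since all these functions are monotone and bounded
by `1 = G₀⁺(∞)`, the convergence is uniform (Pólya), and `F ↦ sup_{t ≥ 0} (G⁺(t) − F(t))⁺` is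
`1`-Lipschitz for the uniform distance.
-/

open MeasureTheory ProbabilityTheory Filter Set Topology

theorem abs_ciSup_sub_ciSup_le {ι : Type*} [Nonempty ι] {f g : ι → ℝ} {c : ℝ}
    (h : ∀ i, |f i - g i| ≤ c) : |(⨆ i, f i) - ⨆ i, g i| ≤ c := by
  have hle : ∀ {f g : ι → ℝ}, (∀ i, |f i - g i| ≤ c) → BddAbove (range f) →
      (⨆ i, g i) ≤ (⨆ i, f i) + c := fun {f g} h hf =>
    ciSup_le fun i => by linarith [(abs_le.1 (h i)).1, le_ciSup hf i]
  have h' : ∀ i, |g i - f i| ≤ c := fun i => abs_sub_comm (g i) (f i) ▸ h i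
  by_cases hf : BddAbove (range f)
  · have hg : BddAbove (range g) := by
      obtain ⟨b, hb⟩ := hf
      exact ⟨b + c, forall_mem_range.2 fun i => by
        linarith [(abs_le.1 (h i)).1, hb (mem_range_self i)]⟩
    exact abs_le.2 ⟨by linarith [hle h hf], by linarith [hle h' hg]⟩
  · have hg : ¬ BddAbove (range g) := fun hg => hf <| by
      obtain ⟨b, hb⟩ := hg
      exact ⟨b + c, forall_mem_range.2 fun i => by
        linarith [(abs_le.1 (h' i)).1, hb (mem_range_self i)]⟩
    rw [Real.iSup_of_not_bddAbove hf, Real.iSup_of_not_bddAbove hg, sub_self, abs_zero]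
    exact (abs_nonneg _).trans (h (Classical.arbitrary ι))

theorem tendsto_iSup_max_sub_of_tendstoUniformlyOn {ι α : Type*} {l : Filter ι}
    {s : Set α} [Nonempty s] {F : ι → α → ℝ} {f g : α → ℝ} (h : TendstoUniformlyOn F f l s) :
    Tendsto (fun n => ⨆ t : s, max (g t - F n t) 0) l (𝓝 (⨆ t : s, max (g t - f t) 0)) := by
  rw [Metric.tendstoUniformlyOn_iff] at h
  refine Metric.tendsto_nhds.2 fun ε hε => ?_
  filter_upwards [h (ε / 2) (half_pos hε)] with n hn
  refine lt_of_le_of_lt (abs_ciSup_sub_ciSup_le fun t => ?_) (half_lt_self hε)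
  refine (abs_max_sub_max_le_abs _ _ _).trans ?_
  have := hn t t.2
  rw [Real.dist_eq] at this
  rw [sub_sub_sub_cancel_left]
  exact this.le

theorem exists_lt_grid_bracket {a h t : ℝ} {k : ℕ} (hh : 0 < h) (hat : a ≤ t)
    (htk : t < a + k * h) : ∃ j < k, a + j * h ≤ t ∧ t ≤ a + (j + 1) * h := by
  have hq : 0 ≤ (t - a) / h := div_nonneg (sub_nonneg.2 hat) hh.le
  refine ⟨⌊(t - a) / h⌋₊, ?_, ?_, ?_⟩
  · exact Nat.floor_lt hq |>.2 ((div_lt_iff₀ hh).2 (by linarith))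
  · linarith [(le_div_iff₀ hh).1 (Nat.floor_le hq)]
  · linarith [(div_lt_iff₀ hh).1 (Nat.lt_floor_add_one ((t - a) / h))]

theorem tendstoUniformlyOn_Ici_of_monotone {ι : Type*} {l : Filter ι} {F : ι → ℝ → ℝ}
    {H : ℝ → ℝ} {a L : ℝ} (hF : ∀ n, Monotone (F n)) (hFL : ∀ n t, F n t ≤ L)
    (hH : Monotone H) (hHc : ContinuousOn H (Ici a)) (hHL : Tendsto H atTop (𝓝 L))
    (hlim : ∀ t, a ≤ t → Tendsto (fun n => F n t) l (𝓝 (H t))) :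
    TendstoUniformlyOn F H l (Ici a) := by
  rw [Metric.tendstoUniformlyOn_iff]
  intro ε hε
  obtain ⟨T, hT, haT⟩ := ((hHL.eventually (lt_mem_nhds (sub_lt_self L (by positivity :
    0 < ε / 3)))).and (eventually_ge_atTop a)).exists
  obtain ⟨δ, hδ, hHδ⟩ := Metric.uniformContinuousOn_iff.1
    (isCompact_Icc.uniformContinuousOn_of_continuous (hHc.mono Icc_subset_Ici_self))
    (ε / 3) (by positivity : 0 < ε / 3)
  -- Grid of mesh `h < δ` covering `[a, T]`: between grid points monotonicity squeezes `F n t`,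
  -- beyond the grid both `F n t` and `H t` lie within `ε / 3` of `L`.
  set h := min (δ / 2) 1
  have hh : 0 < h := lt_min (half_pos hδ) one_pos
  set k := ⌈(T - a) / h⌉₊
  have hTk : T ≤ a + k * h := by linarith [(div_le_iff₀ hh).1 (Nat.le_ceil ((T - a) / h))]
  have hkT : a + k * h ≤ T + 1 := by
    have hk : (k : ℝ) < (T - a) / h + 1 := Nat.ceil_lt_add_one (div_nonneg (sub_nonneg.2 haT) hh.le)
    rw [div_add_one hh.ne', lt_div_iff₀ hh] at hk
    linarith [min_le_right (δ / 2) 1]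
  have hgrid : ∀ j ≤ k, a + j * h ∈ Icc a (T + 1) := fun j hj =>
    ⟨by nlinarith [(Nat.cast_nonneg j : (0:ℝ) ≤ j)], by
      nlinarith [(Nat.cast_le.2 hj : (j:ℝ) ≤ k)]⟩
  have hconv : ∀ᶠ n in l, ∀ j ∈ Finset.range (k + 1), |F n (a + j * h) - H (a + j * h)| < ε / 3 :=
    (eventually_all_finset _).2 fun j hj => by
      simpa only [Real.dist_eq] using Metric.tendsto_nhds.1
        (hlim _ (hgrid j (Nat.lt_succ_iff.1 (Finset.mem_range.1 hj))).1) (ε / 3) (by positivity)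
  filter_upwards [hconv] with n hn t ht
  rw [Real.dist_eq, abs_sub_comm]
  rcases lt_or_ge t (a + k * h) with htk | htk
  · obtain ⟨j, hjk, hjt, htj⟩ := exists_lt_grid_bracket hh ht htk
    have hstep : |H (a + (j + 1) * h) - H (a + j * h)| < ε / 3 := by
      have hmem : a + ((j : ℝ) + 1) * h ∈ Icc a (T + 1) := by exact_mod_cast hgrid (j + 1) hjk
      have := hHδ _ hmem _ (hgrid j hjk.le) (by
        rw [Real.dist_eq, abs_lt]; constructor <;> nlinarith [min_le_left (δ / 2) 1])
      rwa [Real.dist_eq] at this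
    have hj := abs_lt.1 (hn j (by simp; omega))
    have hj1 := abs_lt.1 (hn (j + 1) (by simp; omega))
    push_cast at hj1
    rw [abs_lt] at hstep ⊢
    constructor <;> linarith [hF n hjt, hF n htj, hH hjt, hH htj]
  · have hk := abs_lt.1 (hn k (by simp))
    rw [abs_lt]
    constructor <;> linarith [hF n htk, hFL n t, hH htk, hH hTk, hH.ge_of_tendsto hHL t]

noncomputable def empiricalFreq (n : ℕ) (p : ℕ → Prop) [DecidablePred p] : ℝ :=
  (∑ i ∈ Finset.range n, if p i then (1 : ℝ) else 0) / n

section empiricalFreq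

variable {n : ℕ} {p q r : ℕ → Prop} [DecidablePred p] [DecidablePred q] [DecidablePred r]

theorem empiricalFreq_le_one : empiricalFreq n p ≤ 1 := by
  refine div_le_one_of_le₀ ?_ n.cast_nonneg
  calc (∑ i ∈ Finset.range n, if p i then (1 : ℝ) else 0) ≤ ∑ _i ∈ Finset.range n, (1 : ℝ) :=
        Finset.sum_le_sum fun i _ => by split_ifs <;> norm_num
    _ = n := by simp

theorem empiricalFreq_le_add (h : ∀ i, p i → q i ∨ r i) :
    empiricalFreq n p ≤ empiricalFreq n q + empiricalFreq n r := by
  rw [empiricalFreq, empiricalFreq, empiricalFreq, ← add_div, ← Finset.sum_add_distrib]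
  gcongr with i
  have := h i
  split_ifs <;> simp_all

theorem empiricalFreq_mono (h : ∀ i, p i → q i) : empiricalFreq n p ≤ empiricalFreq n q := by
  unfold empiricalFreq
  gcongr with i
  have := h i
  split_ifs <;> simp_all

end empiricalFreq

theorem exists_rat_lt_of_eventually_nhds {p : ℝ → Prop} {t : ℝ} (h : ∀ᶠ s in 𝓝 t, p s) :
    ∃ q : ℚ, (q : ℝ) < t ∧ p q := by
  obtain ⟨δ, hδ, hp⟩ := Metric.eventually_nhds_iff.1 h
  obtain ⟨q, hq, hqt⟩ := exists_rat_btwn (sub_lt_self t hδ)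
  exact ⟨q, hqt, hp (by rw [Real.dist_eq, abs_lt]; constructor <;> linarith)⟩

theorem exists_rat_gt_of_eventually_nhds {p : ℝ → Prop} {t : ℝ} (h : ∀ᶠ s in 𝓝 t, p s) :
    ∃ q : ℚ, t < q ∧ p q := by
  obtain ⟨δ, hδ, hp⟩ := Metric.eventually_nhds_iff.1 h
  obtain ⟨q, htq, hq⟩ := exists_rat_btwn (lt_add_of_pos_right t hδ)
  exact ⟨q, htq, hp (by rw [Real.dist_eq, abs_lt]; constructor <;> linarith)⟩

section residual

variable {n : ℕ} {r e u : ℕ → ℝ} {σ₀ s η t q M : ℝ}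

theorem empiricalFreq_residual_le_add (hs : 0 < s) (hσ₀ : 0 < σ₀) (hη : 0 ≤ η)
    (hr : ∀ i, |r i - σ₀ * e i| ≤ u i * η) (hq : s * t + M * η ≤ σ₀ * q) :
    empiricalFreq n (fun i => |r i| / s ≤ t)
      ≤ empiricalFreq n (fun i => |e i| ≤ q) + empiricalFreq n (fun i => M < u i) := by
  refine empiricalFreq_le_add fun i hi => (lt_or_ge M (u i)).elim Or.inr fun hu => Or.inl ?_
  refine le_of_mul_le_mul_left ?_ hσ₀
  calc σ₀ * |e i| = |r i - (r i - σ₀ * e i)| := by rw [sub_sub_cancel, abs_mul, abs_of_pos hσ₀]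
    _ ≤ |r i| + |r i - σ₀ * e i| := abs_sub _ _
    _ ≤ s * t + M * η := by
      gcongr
      · rwa [div_le_iff₀ hs, mul_comm] at hi
      · exact (hr i).trans (mul_le_mul_of_nonneg_right hu hη)
    _ ≤ σ₀ * q := hq

theorem empiricalFreq_error_le_add (hs : 0 < s) (hσ₀ : 0 ≤ σ₀) (hη : 0 ≤ η)
    (hr : ∀ i, |r i - σ₀ * e i| ≤ u i * η) (hq : σ₀ * q + M * η ≤ s * t) :
    empiricalFreq n (fun i => |e i| ≤ q)
      ≤ empiricalFreq n (fun i => |r i| / s ≤ t) + empiricalFreq n (fun i => M < u i) := by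
  refine empiricalFreq_le_add fun i hi => (lt_or_ge M (u i)).elim Or.inr fun hu => Or.inl ?_
  rw [div_le_iff₀ hs, mul_comm]
  calc |r i| = |σ₀ * e i + (r i - σ₀ * e i)| := by rw [add_sub_cancel]
    _ ≤ |σ₀ * e i| + |r i - σ₀ * e i| := abs_add_le _ _
    _ ≤ σ₀ * q + M * η := by
      rw [abs_mul, abs_of_nonneg hσ₀]
      gcongr
      exact (hr i).trans (mul_le_mul_of_nonneg_right hu hη)
    _ ≤ s * t := hq

end residual

theorem tendsto_empiricalFreq_residual {r : ℕ → ℕ → ℝ} {e u s η τ : ℕ → ℝ} {σ₀ t : ℝ}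
    {H : ℝ → ℝ} (hσ₀ : 0 < σ₀) (hs : Tendsto s atTop (𝓝 σ₀)) (hη0 : ∀ n, 0 ≤ η n)
    (hη : Tendsto η atTop (𝓝 0)) (hr : ∀ n i, |r n i - σ₀ * e i| ≤ u i * η n)
    (he : ∀ q : ℚ, Tendsto (fun n => empiricalFreq n (fun i => |e i| ≤ q)) atTop (𝓝 (H q)))
    (hu : ∀ M : ℕ, Tendsto (fun n => empiricalFreq n (fun i => M < u i)) atTop (𝓝 (τ M)))
    (hτ : Tendsto τ atTop (𝓝 0)) (hH : ContinuousAt H t) :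
    Tendsto (fun n => empiricalFreq n (fun i => |r n i| / s n ≤ t)) atTop (𝓝 (H t)) := by
  have hs0 : ∀ᶠ n in atTop, 0 < s n := hs.eventually (lt_mem_nhds hσ₀)
  have hMη (M : ℕ) : Tendsto (fun n => (M : ℝ) * η n) atTop (𝓝 0) := by
    simpa using hη.const_mul (M : ℝ)
  refine tendsto_order.2 ⟨fun b hb => ?_, fun b hb => ?_⟩
  · have hγ : 0 < (H t - b) / 3 := by linarith
    obtain ⟨M, hM⟩ := (hτ.eventually (gt_mem_nhds hγ)).exists
    obtain ⟨q, hqt, hq⟩ := exists_rat_lt_of_eventually_nhds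
      (hH.eventually (lt_mem_nhds (sub_lt_self (H t) hγ)))
    have hcond : ∀ᶠ n in atTop, σ₀ * q + M * η n < s n * t := by
      refine ((hMη M).const_add (σ₀ * q)).eventually_lt (hs.mul_const t) ?_
      simpa [mul_comm] using mul_lt_mul_of_pos_left hqt hσ₀
    filter_upwards [hcond, hs0, (he q).eventually (lt_mem_nhds (sub_lt_self (H q) hγ)),
      (hu M).eventually (gt_mem_nhds hM)] with n h1 h2 h3 h4
    linarith [empiricalFreq_error_le_add (n := n) h2 hσ₀.le (hη0 n) (hr n) h1.le]
  · have hγ : 0 < (b - H t) / 3 := by linarith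
    obtain ⟨M, hM⟩ := (hτ.eventually (gt_mem_nhds hγ)).exists
    obtain ⟨q, htq, hq⟩ := exists_rat_gt_of_eventually_nhds
      (hH.eventually (gt_mem_nhds (lt_add_of_pos_right (H t) hγ)))
    have hcond : ∀ᶠ n in atTop, s n * t + M * η n < σ₀ * q := by
      refine ((hs.mul_const t).add (hMη M)).eventually_lt_const ?_
      simpa using mul_lt_mul_of_pos_left htq hσ₀
    filter_upwards [hcond, hs0, (he q).eventually (gt_mem_nhds (lt_add_of_pos_right (H q) hγ)),
      (hu M).eventually (gt_mem_nhds hM)] with n h1 h2 h3 h4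
    linarith [empiricalFreq_residual_le_add (n := n) h2 hσ₀ (hη0 n) (hr n) h1.le]

theorem tendsto_iSup_max_sub_empiricalFreq_residual {r : ℕ → ℕ → ℝ} {e u s η τ : ℕ → ℝ}
    {σ₀ : ℝ} {H g : ℝ → ℝ} (hσ₀ : 0 < σ₀) (hs : Tendsto s atTop (𝓝 σ₀)) (hη0 : ∀ n, 0 ≤ η n)
    (hη : Tendsto η atTop (𝓝 0)) (hr : ∀ n i, |r n i - σ₀ * e i| ≤ u i * η n)
    (he : ∀ q : ℚ, Tendsto (fun n => empiricalFreq n (fun i => |e i| ≤ q)) atTop (𝓝 (H q)))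
    (hu : ∀ M : ℕ, Tendsto (fun n => empiricalFreq n (fun i => M < u i)) atTop (𝓝 (τ M)))
    (hτ : Tendsto τ atTop (𝓝 0)) (hH : Monotone H) (hHc : Continuous H)
    (hH1 : Tendsto H atTop (𝓝 1)) :
    Tendsto (fun n => ⨆ t : Ici (0 : ℝ), max (g t - empiricalFreq n (fun i => |r n i| / s n ≤ t)) 0)
      atTop (𝓝 (⨆ t : Ici (0 : ℝ), max (g t - H t) 0)) :=
  tendsto_iSup_max_sub_of_tendstoUniformlyOn
    (F := fun n t => empiricalFreq n fun i => |r n i| / s n ≤ t) <|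
    tendstoUniformlyOn_Ici_of_monotone
      (fun _ _ _ hst => empiricalFreq_mono fun _ hi => hi.trans hst)
      (fun _ _ => empiricalFreq_le_one) hH hHc.continuousOn hH1 fun _ _ =>
        tendsto_empiricalFreq_residual hσ₀ hs hη0 hη hr he hu hτ hHc.continuousAt

theorem ae_tendsto_empiricalFreq_mem {Ω E : Type*} [MeasurableSpace Ω] [MeasurableSpace E]
    {P : Measure Ω} [IsProbabilityMeasure P] {Z : ℕ → Ω → E} (hindep : iIndepFun Z P)
    (hident : ∀ i, IdentDistrib (Z i) (Z 0) P P) {S : Set E} (hS : MeasurableSet S)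
    [DecidablePred (· ∈ S)] :
    ∀ᵐ ω ∂P, Tendsto (fun n => empiricalFreq n (fun i => Z i ω ∈ S)) atTop
      (𝓝 (P.real (Z 0 ⁻¹' S))) := by
  have hf : Measurable fun z : E => if z ∈ S then (1 : ℝ) else 0 :=
    Measurable.ite hS measurable_const measurable_const
  have hZ0 : AEMeasurable (Z 0) P := (hident 0).aemeasurable_fst
  have hint : Integrable (fun ω => if Z 0 ω ∈ S then (1 : ℝ) else 0) P :=
    .of_bound (hf.comp_aemeasurable hZ0).aestronglyMeasurable 1
      (.of_forall fun ω => by split_ifs <;> simp)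
  have hmean : P[fun ω => if Z 0 ω ∈ S then (1 : ℝ) else 0] = P.real (Z 0 ⁻¹' S) := by
    rw [← integral_map hZ0 hf.aestronglyMeasurable, ← map_measureReal_apply_of_aemeasurable hZ0 hS,
      ← integral_indicator_one hS]
    simp only [Set.indicator_apply, Pi.one_apply]
  have := strong_law_ae_real (fun i ω => if Z i ω ∈ S then (1 : ℝ) else 0) hint
    (fun i j hij => (hindep.indepFun hij).comp hf hf) (fun i => (hident i).comp hf)
  rwa [hmean] at this

theorem cdf_map_eq {Ω : Type*} [MeasurableSpace Ω] {P : Measure Ω} [IsProbabilityMeasure P]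
    {X : Ω → ℝ} (hX : AEMeasurable X P) (t : ℝ) :
    cdf (P.map X) t = P.real {ω | X ω ≤ t} := by
  have := Measure.isProbabilityMeasure_map hX
  rw [cdf_eq_real, map_measureReal_apply_of_aemeasurable hX measurableSet_Iic]
  rfl

theorem tendsto_measureReal_lt_atTop {Ω : Type*} [MeasurableSpace Ω] {P : Measure Ω}
    [IsProbabilityMeasure P] {X : Ω → ℝ} (hX : AEMeasurable X P) :
    Tendsto (fun t => P.real {ω | t < X ω}) atTop (𝓝 0) := by
  have := Measure.isProbabilityMeasure_map hX
  have h (t : ℝ) : P.real {ω | t < X ω} = 1 - cdf (P.map X) t := by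
    rw [cdf_eq_real, ← probReal_compl_eq_one_sub measurableSet_Iic, compl_Iic,
      map_measureReal_apply_of_aemeasurable hX measurableSet_Ioi]
    rfl
  simpa [h] using (tendsto_cdf_atTop (P.map X)).const_sub 1

theorem nullSingletonClass_of_continuous_cdf {μ : Measure ℝ} [IsProbabilityMeasure μ]
    (h : Continuous (cdf μ)) : NullSingletonClass μ where
  measure_singleton a := by
    have hleft : Function.leftLim (cdf μ) a = cdf μ a := (h.continuousWithinAt).leftLim_eq
    have := (cdf μ).measure_singleton a
    rw [measure_cdf, hleft, sub_self, ENNReal.ofReal_zero] at this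
    exact this

theorem continuous_cdf {μ : Measure ℝ} [IsProbabilityMeasure μ] [NullSingletonClass μ] :
    Continuous (cdf μ) := by
  refine continuous_iff_continuousAt.2 fun a => continuousAt_iff_continuous_left_right.2
    ⟨?_, (cdf μ).right_continuous a⟩
  rw [← continuousWithinAt_Iio_iff_Iic, (monotone_cdf μ).continuousWithinAt_Iio_iff_leftLim_eq]
  have h := (cdf μ).measure_singleton a
  rw [measure_cdf, measure_singleton, eq_comm, ENNReal.ofReal_eq_zero, sub_nonpos] at h
  exact le_antisymm ((monotone_cdf μ).leftLim_le le_rfl) h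

instance nullSingletonClass_map_abs {μ : Measure ℝ} [NullSingletonClass μ] :
    NullSingletonClass (μ.map abs) where
  measure_singleton a := by
    rw [Measure.map_apply measurable_abs (measurableSet_singleton a)]
    refine measure_mono_null (fun x hx => ?_) ((Set.toFinite {a, -a}).measure_zero μ)
    have hx : |x| = a := hx
    rcases abs_choice x with h | h <;> simp only [mem_insert_iff, mem_singleton_iff] <;>
      [left; right] <;> linarith

theorem continuous_cdf_map_abs {Ω : Type*} [MeasurableSpace Ω] {P : Measure Ω}
    [IsProbabilityMeasure P] {X : Ω → ℝ} (hX : AEMeasurable X P) (h : Continuous (cdf (P.map X))) :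
    Continuous (cdf (P.map fun ω => |X ω|)) := by
  have := Measure.isProbabilityMeasure_map hX
  have := nullSingletonClass_of_continuous_cdf h
  have := Measure.isProbabilityMeasure_map (μ := P.map X) measurable_abs.aemeasurable
  rw [← Function.comp_def abs X, ← measurable_abs.aemeasurable.map_map_of_aemeasurable hX]
  exact continuous_cdf

theorem abs_sum_mul_sub_sum_mul_le {p : ℕ} (v w z : EuclideanSpace ℝ (Fin p)) :
    |∑ j, v j * w j - ∑ j, v j * z j| ≤ ‖v‖ * ‖z - w‖ := by
  have h : ∑ j, v j * w j - ∑ j, v j * z j = inner ℝ v (w - z) := by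
    simp [PiLp.inner_apply, mul_sub, Finset.sum_sub_distrib, mul_comm]
  rw [h, norm_sub_rev]
  exact abs_real_inner_le_norm _ _

theorem adaptive_proportion_consistency_general
    {Ω : Type*} [MeasurableSpace Ω] (P : Measure Ω) [IsProbabilityMeasure P]
    {p : ℕ}
    -- the observations and errors
    (x : ℕ → Ω → EuclideanSpace ℝ (Fin p)) (ε : ℕ → Ω → ℝ) (y : ℕ → Ω → ℝ)
    -- the linear model
    (β0 : EuclideanSpace ℝ (Fin p)) (σ0 : ℝ) (hσ0 : 0 < σ0)
    (hmod : ∀ i ω, y i ω = (∑ j, x i ω j * β0 j) + σ0 * ε i ω)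
    -- (ε_i, x_i) are i.i.d., with ε_i independent of x_i
    (hindep : iIndepFun (fun i ω => (ε i ω, x i ω)) P)
    (hident : ∀ i, IdentDistrib (fun ω => (ε i ω, x i ω)) (fun ω => (ε 0 ω, x 0 ω)) P P)
    -- G₀ is the continuous distribution function of the errors, symmetric around 0
    (G0 : ℝ → ℝ)
    (hG0 : ∀ i t, (P {ω | ε i ω ≤ t}).toReal = G0 t)
    (hG0_cont : Continuous G0)
    -- strongly consistent estimators
    (βhat : ℕ → Ω → EuclideanSpace ℝ (Fin p)) (σhat : ℕ → Ω → ℝ)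
    (hβhat : ∀ᵐ ω ∂P, Tendsto (fun n => βhat n ω) atTop (nhds β0))
    (hσhat : ∀ᵐ ω ∂P, Tendsto (fun n => σhat n ω) atTop (nhds σ0))
    -- G₀⁺ is the distribution function of |ε₁|
    (G0plus : ℝ → ℝ)
    (hG0plus : ∀ t, (P {ω | |ε 0 ω| ≤ t}).toReal = G0plus t)
    -- G is a fixed continuous reference distribution and G⁺ the distribution of |V|, V ~ G
    (Gplus : ℝ → ℝ) :
    ∀ᵐ ω ∂P, Tendsto
      (fun n =>
        -- dₙ
        ⨆ t : Ici (0:ℝ), max (Gplus t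
          - (∑ i ∈ Finset.range n,
              if |y i ω - ∑ j, x i ω j * βhat n ω j| / σhat n ω ≤ (t : ℝ) then (1:ℝ) else 0) / n) 0)
      atTop
      -- d₀
      (nhds (⨆ t : Ici (0:ℝ), max (Gplus t - G0plus t) 0)) := by
  have hZ0 : AEMeasurable (fun ω => (ε 0 ω, x 0 ω)) P := (hident 0).aemeasurable_fst
  have hε0 : AEMeasurable (ε 0) P := hZ0.fst
  have hcdf : cdf (P.map (ε 0)) = G0 := funext fun t => (cdf_map_eq hε0 t).trans (hG0 0 t)
  have hcdf_abs : cdf (P.map fun ω => |ε 0 ω|) = G0plus :=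
    funext fun t => (cdf_map_eq hε0.abs t).trans (hG0plus t)
  have he : ∀ᵐ ω ∂P, ∀ q : ℚ, Tendsto (fun n => empiricalFreq n fun i => |ε i ω| ≤ q) atTop
      (𝓝 (G0plus q)) := ae_all_iff.2 fun q =>
    (ae_tendsto_empiricalFreq_mem hindep hident (measurableSet_le measurable_fst.abs
      measurable_const : MeasurableSet {v | |v.1| ≤ (q : ℝ)})).mono fun ω h => by
        rw [← hG0plus]
        exact h
  have hu : ∀ᵐ ω ∂P, ∀ M : ℕ, Tendsto (fun n => empiricalFreq n fun i => (M : ℝ) < ‖x i ω‖)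
      atTop (𝓝 (P.real {ω | (M : ℝ) < ‖x 0 ω‖})) := ae_all_iff.2 fun M =>
    ae_tendsto_empiricalFreq_mem hindep hident
      (measurableSet_lt measurable_const measurable_snd.norm)
  filter_upwards [hβhat, hσhat, he, hu] with ω hβ hσ he hu
  have hresid (n i : ℕ) : |(y i ω - ∑ j, x i ω j * βhat n ω j) - σ0 * ε i ω|
      ≤ ‖x i ω‖ * ‖βhat n ω - β0‖ := by
    rw [hmod, add_sub_right_comm, add_sub_cancel_right]
    exact abs_sum_mul_sub_sum_mul_le _ _ _
  simpa only [empiricalFreq] using tendsto_iSup_max_sub_empiricalFreq_residual (g := Gplus)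
    (e := fun i => ε i ω) (u := fun i => ‖x i ω‖) (η := fun n => ‖βhat n ω - β0‖) hσ0 hσ
    (fun n => norm_nonneg _) (tendsto_iff_norm_sub_tendsto_zero.1 hβ) hresid he hu
    ((tendsto_measureReal_lt_atTop hZ0.snd.norm).comp tendsto_natCast_atTop_atTop)
    (hcdf_abs ▸ monotone_cdf _) (hcdf_abs ▸ continuous_cdf_map_abs hε0 (hcdf ▸ hG0_cont))
    (hcdf_abs ▸ tendsto_cdf_atTop _)

/-- Lemma B.2 (b): under the linear regression model, the data-driven
proportion `dₙ = sup_{t ≥ 0} (G⁺(t) − Gₙ⁺(t))⁺` converges almost surely to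
`d₀ = sup_{t ≥ 0} (G⁺(t) − G₀⁺(t))⁺`. -/
theorem adaptive_proportion_consistency
    {Ω : Type*} [MeasurableSpace Ω] (P : Measure Ω) [IsProbabilityMeasure P]
    {p : ℕ}
    -- the observations and errors
    (x : ℕ → Ω → EuclideanSpace ℝ (Fin p)) (ε : ℕ → Ω → ℝ) (y : ℕ → Ω → ℝ)
    (hx_meas : ∀ i, Measurable (x i)) (hε_meas : ∀ i, Measurable (ε i))
    -- the linear model
    (β0 : EuclideanSpace ℝ (Fin p)) (σ0 : ℝ) (hσ0 : 0 < σ0)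
    (hmod : ∀ i ω, y i ω = (∑ j, x i ω j * β0 j) + σ0 * ε i ω)
    -- (ε_i, x_i) are i.i.d., with ε_i independent of x_i
    (hindep : iIndepFun (fun i ω => (ε i ω, x i ω)) P)
    (hident : ∀ i, IdentDistrib (fun ω => (ε i ω, x i ω)) (fun ω => (ε 0 ω, x 0 ω)) P P)
    (hεx : ∀ i, IndepFun (ε i) (x i) P)
    -- G₀ is the continuous distribution function of the errors, symmetric around 0
    (G0 : ℝ → ℝ)
    (hG0 : ∀ i t, (P {ω | ε i ω ≤ t}).toReal = G0 t)
    (hG0_cont : Continuous G0)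
    (hG0_symm : ∀ t, G0 (-t) = 1 - G0 t)
    -- strongly consistent estimators
    (βhat : ℕ → Ω → EuclideanSpace ℝ (Fin p)) (σhat : ℕ → Ω → ℝ)
    (hσhat_pos : ∀ n ω, 0 < σhat n ω)
    (hβhat : ∀ᵐ ω ∂P, Tendsto (fun n => βhat n ω) atTop (nhds β0))
    (hσhat : ∀ᵐ ω ∂P, Tendsto (fun n => σhat n ω) atTop (nhds σ0))
    -- G₀⁺ is the distribution function of |ε₁|
    (G0plus : ℝ → ℝ)
    (hG0plus : ∀ t, (P {ω | |ε 0 ω| ≤ t}).toReal = G0plus t)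
    -- G is a fixed continuous reference distribution and G⁺ the distribution of |V|, V ~ G
    (G : ℝ → ℝ) (hG_mono : Monotone G) (hG_cont : Continuous G)
    (hG_range : ∀ t, G t ∈ Icc (0:ℝ) 1)
    (hG_top : Tendsto G atTop (nhds 1)) (hG_bot : Tendsto G atBot (nhds 0))
    (Gplus : ℝ → ℝ)
    (hGplus : ∀ t, 0 ≤ t → Gplus t = G t - G (-t))
    (hGplus_neg : ∀ t, t < 0 → Gplus t = 0) :
    ∀ᵐ ω ∂P, Tendsto
      (fun n =>
        -- dₙ
        ⨆ t : Ici (0:ℝ), max (Gplus t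
          - (∑ i ∈ Finset.range n,
              if |y i ω - ∑ j, x i ω j * βhat n ω j| / σhat n ω ≤ (t : ℝ) then (1:ℝ) else 0) / n) 0)
      atTop
      -- d₀
      (nhds (⨆ t : Ici (0:ℝ), max (Gplus t - G0plus t) 0)) :=
  adaptive_proportion_consistency_general P x ε y β0 σ0 hσ0 hmod hindep hident G0 hG0 hG0_cont βhat
    σhat hβhat hσhat G0plus hG0plus Gplus
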